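/- arXiv:1307.2790 — 2 statements merged into one kernel-verified Lean document; each statement's English description precedes it below -/
import Mathlib

section
/- (Theorem 1, part 1: exponential stability and infinite-horizon cost) Consider a closed-loop trajectory of the AR-RHC under a replay attack signal with at most S consecutive attacks, with horizon N ≥ S + 1, and assume every N′-QP encountered attains its infimum for N − S ≤ N′ ≤ N. If γ_{N,S} < 1, then for all k ≥ 0 (with s(−1) := 0): V_{N−s(k−1)}(x(k)) ≤ γ_{N,S}^k · V_N(x(0)); moreover, the infinite-horizon cost satisfies Σ_{k=0}^{∞} ( x(k)ᵀ P x(k) + u_k ᵀ Q u_k ) ≤ V_N(x(0))/(1 − γ_{N,S}), where u_k := u(k | k − s(k)) is the input applied at time k. -/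
open Matrix Finset Filter Topology

/-- The smallest eigenvalue of a (symmetric) real matrix. -/
noncomputable def lamMin {n : ℕ} (R : Matrix (Fin n) (Fin n) ℝ) : ℝ :=
  if h : R.IsHermitian then ⨅ i, h.eigenvalues i else 0

/-- The largest eigenvalue of a (symmetric) real matrix. -/
noncomputable def lamMax {n : ℕ} (R : Matrix (Fin n) (Fin n) ℝ) : ℝ :=
  if h : R.IsHermitian then ⨆ i, h.eigenvalues i else 0

/-- The quadratic form `xᵀ R x`. -/
noncomputable def qf {p : ℕ} (R : Matrix (Fin p) (Fin p) ℝ) (x : Fin p → ℝ) : ℝ :=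
  x ⬝ᵥ R.mulVec x

/-- λ := 1 − λ_min(Q̄)/λ_max(P̄). -/
noncomputable def lamParam {n : ℕ} (Qb Pb : Matrix (Fin n) (Fin n) ℝ) : ℝ :=
  1 - lamMin Qb / lamMax Pb

/-- φ_N := (λ_max(P̄)·λ_max(P + KᵀQK)/λ_min(P̄))·(1 − λ^{N+1})/(1 − λ). -/
noncomputable def phi {n m : ℕ} (Qb Pb P : Matrix (Fin n) (Fin n) ℝ)
    (Q : Matrix (Fin m) (Fin m) ℝ) (K : Matrix (Fin m) (Fin n) ℝ) (N : ℕ) : ℝ :=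
  (lamMax Pb * lamMax (P + Kᵀ * Q * K) / lamMin Pb) *
    ((1 - lamParam Qb Pb ^ (N + 1)) / (1 - lamParam Qb Pb))

/-- φ_∞ := λ_max(P̄)·λ_max(P + KᵀQK)/(λ_min(P̄)·(1 − λ)). -/
noncomputable def phiInf {n m : ℕ} (Qb Pb P : Matrix (Fin n) (Fin n) ℝ)
    (Q : Matrix (Fin m) (Fin m) ℝ) (K : Matrix (Fin m) (Fin n) ℝ) : ℝ :=
  lamMax Pb * lamMax (P + Kᵀ * Q * K) / (lamMin Pb * (1 - lamParam Qb Pb))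

/-- ψ := λ_max(KᵀQK + ĀᵀPĀ)/λ_min(P). -/
noncomputable def psiC {n m : ℕ} (P Abar : Matrix (Fin n) (Fin n) ℝ)
    (Q : Matrix (Fin m) (Fin m) ℝ) (K : Matrix (Fin m) (Fin n) ℝ) : ℝ :=
  lamMax (Kᵀ * Q * K + Abarᵀ * P * Abar) / lamMin P

/-- χ := 1 − λ_min(P)/φ_∞. -/
noncomputable def chiC {n m : ℕ} (Qb Pb P : Matrix (Fin n) (Fin n) ℝ)
    (Q : Matrix (Fin m) (Fin m) ℝ) (K : Matrix (Fin m) (Fin n) ℝ) : ℝ :=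
  1 - lamMin P / phiInf Qb Pb P Q K

/-- α_N := (λ_max(KᵀQK + ĀᵀPĀ)/λ_min(P))·∏_{κ=0}^{N−1}(1 − λ_min(P)/φ_{κ+1}). -/
noncomputable def alphaC {n m : ℕ} (Qb Pb P Abar : Matrix (Fin n) (Fin n) ℝ)
    (Q : Matrix (Fin m) (Fin m) ℝ) (K : Matrix (Fin m) (Fin n) ℝ) (N : ℕ) : ℝ :=
  psiC P Abar Q K * ∏ κ ∈ Finset.range N, (1 - lamMin P / phi Qb Pb P Q K (κ + 1))

/-- γ_{N,S} := (1 − λ_min(P)/φ_∞)·max{1 + α_{N−S−1}, (1 + α_{N−1})·∏_{ℓ=N−S}^{N−1}(1 + α_ℓ)}. -/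
noncomputable def gammaNS {n m : ℕ} (Qb Pb P Abar : Matrix (Fin n) (Fin n) ℝ)
    (Q : Matrix (Fin m) (Fin m) ℝ) (K : Matrix (Fin m) (Fin n) ℝ) (N S : ℕ) : ℝ :=
  (1 - lamMin P / phiInf Qb Pb P Q K) *
    max (1 + alphaC Qb Pb P Abar Q K (N - S - 1))
      ((1 + alphaC Qb Pb P Abar Q K (N - 1)) *
        ∏ ℓ ∈ Finset.Ico (N - S) N, (1 + alphaC Qb Pb P Abar Q K ℓ))

/-- The trajectory of `x(τ+1) = A x(τ) + B u(τ)` from `x0` under the control sequence `u`. -/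
def traj {n m : ℕ} (A : Matrix (Fin n) (Fin n) ℝ) (B : Matrix (Fin n) (Fin m) ℝ)
    (x0 : Fin n → ℝ) (u : ℕ → Fin m → ℝ) : ℕ → Fin n → ℝ
  | 0 => x0
  | τ + 1 => A *ᵥ traj A B x0 u τ + B *ᵥ u τ

/-- Feasibility of a control sequence `u(0),…,u(N−1)` for the `N`-QP at `x`. -/
def Feasible {n m : ℕ} (A : Matrix (Fin n) (Fin n) ℝ) (B : Matrix (Fin n) (Fin m) ℝ)
    (X0 : Set (Fin n → ℝ)) (U : Set (Fin m → ℝ)) (N : ℕ) (x : Fin n → ℝ)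
    (u : ℕ → Fin m → ℝ) : Prop :=
  (∀ τ < N, u τ ∈ U) ∧ (∀ τ < N, traj A B x u (τ + 1) ∈ X0)

/-- The cost `Σ_{τ=0}^{N−1}(x(τ)ᵀPx(τ) + u(τ)ᵀQu(τ)) + x(N)ᵀPx(N)` of the `N`-QP. -/
noncomputable def cost {n m : ℕ} (A : Matrix (Fin n) (Fin n) ℝ) (B : Matrix (Fin n) (Fin m) ℝ)
    (P : Matrix (Fin n) (Fin n) ℝ) (Q : Matrix (Fin m) (Fin m) ℝ) (N : ℕ)
    (x : Fin n → ℝ) (u : ℕ → Fin m → ℝ) : ℝ :=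
  (∑ τ ∈ Finset.range N, (qf P (traj A B x u τ) + qf Q (u τ))) + qf P (traj A B x u N)

/-- `V_N(x)`: the optimal value of the `N`-QP at `x`. -/
noncomputable def Vopt {n m : ℕ} (A : Matrix (Fin n) (Fin n) ℝ) (B : Matrix (Fin n) (Fin m) ℝ)
    (P : Matrix (Fin n) (Fin n) ℝ) (Q : Matrix (Fin m) (Fin m) ℝ)
    (X0 : Set (Fin n → ℝ)) (U : Set (Fin m → ℝ)) (N : ℕ) (x : Fin n → ℝ) : ℝ :=
  sInf (cost A B P Q N x '' {u | Feasible A B X0 U N x u})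

/-!
Along an optimal plan the remaining cost contracts by the factor `1 - λ_min(P)/φ_M` per step:
the feedback plan `u = K x` certifies `V_M(x) ≤ φ_M |x|²`, while the stage cost is at least
`λ_min(P) |x|²`. Appending one feedback step to an optimal plan gives
`V_{M+1} ≤ (1 + α_M) V_M`. During `d ≤ S` consecutive attacks the plant keeps following the last
received optimal plan, so between two attack-free times the value function is multiplied by at
most `χ^{d+1} (1 + α_{N-S-1})^{d+1} ≤ γ_{N,S}^{d+1}`, where `χ = 1 - λ_min(P)/φ_∞`. The stage costs
are then dominated by a geometric sequence, which gives the infinite-horizon bound.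
-/

section QuadraticForm

variable {p q : ℕ} {R R' : Matrix (Fin p) (Fin p) ℝ}

lemma qf_nonneg (hR : R.PosSemidef) (x : Fin p → ℝ) : 0 ≤ qf R x := by
  simpa [qf] using hR.dotProduct_mulVec_nonneg x

lemma qf_add (R R' : Matrix (Fin p) (Fin p) ℝ) (x : Fin p → ℝ) :
    qf (R + R') x = qf R x + qf R' x := by
  simp [qf, add_mulVec, dotProduct_add]

lemma qf_neg (R : Matrix (Fin p) (Fin p) ℝ) (x : Fin p → ℝ) : qf (-R) x = -qf R x := by
  simp [qf, neg_mulVec, dotProduct_neg]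

lemma qf_one (x : Fin p → ℝ) : qf 1 x = x ⬝ᵥ x := by
  simp [qf]

lemma qf_diagonal (d x : Fin p → ℝ) : qf (diagonal d) x = ∑ i, d i * x i ^ 2 := by
  simp only [qf, mulVec_diagonal, dotProduct]
  exact Finset.sum_congr rfl fun i _ => by ring

lemma qf_mulVec (R : Matrix (Fin p) (Fin p) ℝ) (M : Matrix (Fin p) (Fin q) ℝ) (x : Fin q → ℝ) :
    qf R (M *ᵥ x) = qf (Mᵀ * R * M) x := by
  rw [qf, qf, ← mulVec_mulVec, ← mulVec_mulVec, dotProduct_mulVec x, vecMul_transpose]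

lemma Matrix.PosSemidef.transpose_mul_mul_same (hR : R.PosSemidef)
    (M : Matrix (Fin p) (Fin q) ℝ) : (Mᵀ * R * M).PosSemidef := by
  simpa [conjTranspose_eq_transpose_of_trivial] using hR.conjTranspose_mul_mul_same M

/-- Coordinates of `x` in an orthonormal eigenbasis of `R`. -/
lemma Matrix.IsHermitian.exists_qf_eq_sum_eigenvalues (hR : R.IsHermitian) (x : Fin p → ℝ) :
    ∃ y : Fin p → ℝ, qf R x = ∑ i, hR.eigenvalues i * y i ^ 2 ∧ x ⬝ᵥ x = ∑ i, y i ^ 2 := by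
  set V : Matrix (Fin p) (Fin p) ℝ := (hR.eigenvectorUnitary : Matrix (Fin p) (Fin p) ℝ)
  have hR_eq : R = V * diagonal hR.eigenvalues * Vᵀ := by
    simpa [star_eq_conjTranspose, conjTranspose_eq_transpose_of_trivial] using
      hR.spectral_theorem
  have hV : V * Vᵀ = 1 := by
    simpa [star_eq_conjTranspose, conjTranspose_eq_transpose_of_trivial] using
      (mem_unitaryGroup_iff).mp hR.eigenvectorUnitary.2
  refine ⟨Vᵀ *ᵥ x, ?_, ?_⟩
  · rw [← qf_diagonal, qf_mulVec, transpose_transpose, ← hR_eq]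
  · calc x ⬝ᵥ x = qf (V * diagonal 1 * Vᵀ) x := by simp [hV, qf_one]
      _ = qf (diagonal 1) (Vᵀ *ᵥ x) := by rw [qf_mulVec, transpose_transpose]
      _ = ∑ i, (Vᵀ *ᵥ x) i ^ 2 := by simp [qf_one, dotProduct, sq]

lemma qf_le_lamMax_mul (hR : R.IsHermitian) (x : Fin p → ℝ) :
    qf R x ≤ lamMax R * (x ⬝ᵥ x) := by
  obtain ⟨y, hqf, hx⟩ := hR.exists_qf_eq_sum_eigenvalues x
  rw [hqf, hx, lamMax, dif_pos hR, Finset.mul_sum]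
  gcongr with i
  exact le_ciSup (Set.finite_range _).bddAbove i

lemma lamMin_mul_le_qf (hR : R.IsHermitian) (x : Fin p → ℝ) :
    lamMin R * (x ⬝ᵥ x) ≤ qf R x := by
  obtain ⟨y, hqf, hx⟩ := hR.exists_qf_eq_sum_eigenvalues x
  rw [hqf, hx, lamMin, dif_pos hR, Finset.mul_sum]
  gcongr with i
  exact ciInf_le (Set.finite_range _).bddBelow i

lemma lamMin_pos (hp : 0 < p) (hR : R.PosDef) : 0 < lamMin R := by
  have : Nonempty (Fin p) := ⟨⟨0, hp⟩⟩
  obtain ⟨i, hi⟩ := exists_eq_ciInf_of_finite (f := hR.1.eigenvalues)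
  rw [lamMin, dif_pos hR.1, ← hi]
  exact hR.eigenvalues_pos i

lemma exists_dotProduct_self_eq_one (hp : 0 < p) : ∃ e : Fin p → ℝ, e ⬝ᵥ e = 1 :=
  ⟨Pi.single ⟨0, hp⟩ 1, by simp⟩

lemma lamMin_le_lamMax_of_qf_le (hp : 0 < p) (hR : R.IsHermitian) (hR' : R'.IsHermitian)
    (h : ∀ z, qf R z ≤ qf R' z) : lamMin R ≤ lamMax R' := by
  obtain ⟨e, he⟩ := exists_dotProduct_self_eq_one hp
  simpa [he] using (lamMin_mul_le_qf hR e).trans ((h e).trans (qf_le_lamMax_mul hR' e))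

lemma lamMax_pos (hp : 0 < p) (hR : R.PosDef) : 0 < lamMax R :=
  (lamMin_pos hp hR).trans_le (lamMin_le_lamMax_of_qf_le hp hR.1 hR.1 fun _ => le_rfl)

lemma lamMax_nonneg (hp : 0 < p) (hR : R.PosSemidef) : 0 ≤ lamMax R := by
  obtain ⟨e, he⟩ := exists_dotProduct_self_eq_one hp
  simpa [he] using (qf_nonneg hR e).trans (qf_le_lamMax_mul hR.1 e)

end QuadraticForm

section OpenLoop

variable {n m : ℕ} (A : Matrix (Fin n) (Fin n) ℝ) (B : Matrix (Fin n) (Fin m) ℝ)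
  (P : Matrix (Fin n) (Fin n) ℝ) (Q : Matrix (Fin m) (Fin m) ℝ)
  (X0 : Set (Fin n → ℝ)) (U : Set (Fin m → ℝ))

lemma traj_congr {x : Fin n → ℝ} {u u' : ℕ → Fin m → ℝ} {τ : ℕ}
    (h : ∀ σ < τ, u σ = u' σ) : traj A B x u τ = traj A B x u' τ := by
  induction τ with
  | zero => rfl
  | succ τ ih => simp only [traj, ih fun σ hσ => h σ (by omega), h τ (by omega)]

lemma traj_add (x : Fin n → ℝ) (u : ℕ → Fin m → ℝ) (i τ : ℕ) :
    traj A B (traj A B x u i) (fun σ => u (i + σ)) τ = traj A B x u (i + τ) := by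
  induction τ with
  | zero => rfl
  | succ τ ih => rw [traj, ih]; rfl

lemma cost_nonneg (hP : P.PosSemidef) (hQ : Q.PosSemidef) (N : ℕ) (x : Fin n → ℝ)
    (u : ℕ → Fin m → ℝ) : 0 ≤ cost A B P Q N x u :=
  add_nonneg (Finset.sum_nonneg fun _ _ => add_nonneg (qf_nonneg hP _) (qf_nonneg hQ _))
    (qf_nonneg hP _)

lemma cost_add (i M : ℕ) (x : Fin n → ℝ) (u : ℕ → Fin m → ℝ) :
    cost A B P Q (i + M) x u = (∑ τ ∈ range i, (qf P (traj A B x u τ) + qf Q (u τ)))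
      + cost A B P Q M (traj A B x u i) (fun σ => u (i + σ)) := by
  simp only [cost, sum_range_add, traj_add, add_assoc]

lemma cost_zero (x : Fin n → ℝ) (u : ℕ → Fin m → ℝ) : cost A B P Q 0 x u = qf P x := by
  simp [cost, traj]

lemma qf_add_qf_le_cost (hP : P.PosSemidef) (hQ : Q.PosSemidef) (M : ℕ) (x : Fin n → ℝ)
    (u : ℕ → Fin m → ℝ) : qf P x + qf Q (u 0) ≤ cost A B P Q (M + 1) x u := by
  rw [cost, sum_range_succ']
  have hsum := sum_nonneg fun τ (_ : τ ∈ range M) =>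
    add_nonneg (qf_nonneg hP (traj A B x u (τ + 1))) (qf_nonneg hQ (u (τ + 1)))
  exact le_add_of_le_of_nonneg (le_add_of_nonneg_left hsum) (qf_nonneg hP _)

lemma Vopt_nonneg (hP : P.PosSemidef) (hQ : Q.PosSemidef) (N : ℕ) (x : Fin n → ℝ) :
    0 ≤ Vopt A B P Q X0 U N x :=
  Real.sInf_nonneg <| by
    rintro _ ⟨u, -, rfl⟩
    exact cost_nonneg A B P Q hP hQ N x u

def IsOptimal (N : ℕ) (x : Fin n → ℝ) (u : ℕ → Fin m → ℝ) : Prop :=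
  Feasible A B X0 U N x u ∧ cost A B P Q N x u = Vopt A B P Q X0 U N x

def splice (u w : ℕ → Fin m → ℝ) (i : ℕ) : ℕ → Fin m → ℝ :=
  fun τ => if τ < i then u τ else w (τ - i)

variable {A B P Q X0 U}

lemma traj_splice_of_le {x : Fin n → ℝ} {u w : ℕ → Fin m → ℝ} {i τ : ℕ} (hτ : τ ≤ i) :
    traj A B x (splice u w i) τ = traj A B x u τ :=
  traj_congr A B fun σ hσ => if_pos (by omega)

lemma traj_splice_add (x : Fin n → ℝ) (u w : ℕ → Fin m → ℝ) (i σ : ℕ) :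
    traj A B x (splice u w i) (i + σ) = traj A B (traj A B x u i) w σ := by
  rw [← traj_add, traj_splice_of_le le_rfl]
  exact traj_congr A B fun τ _ => by simp [splice]

lemma cost_splice (i M : ℕ) (x : Fin n → ℝ) (u w : ℕ → Fin m → ℝ) :
    cost A B P Q (i + M) x (splice u w i)
      = (∑ τ ∈ range i, (qf P (traj A B x u τ) + qf Q (u τ)))
        + cost A B P Q M (traj A B x u i) w := by
  rw [cost_add]
  congr 1
  · refine sum_congr rfl fun τ hτ => ?_
    rw [traj_splice_of_le (mem_range.mp hτ).le, splice, if_pos (mem_range.mp hτ)]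
  · rw [traj_splice_of_le le_rfl]
    exact congrArg _ (funext fun σ => by simp [splice])

lemma Feasible.mono {N : ℕ} {x : Fin n → ℝ} {u : ℕ → Fin m → ℝ}
    (hu : Feasible A B X0 U N x u) {M : ℕ} (hM : M ≤ N) : Feasible A B X0 U M x u :=
  ⟨fun τ hτ => hu.1 τ (by omega), fun τ hτ => hu.2 τ (by omega)⟩

lemma Feasible.shift {N : ℕ} {x : Fin n → ℝ} {u : ℕ → Fin m → ℝ}
    (hu : Feasible A B X0 U N x u) (i : ℕ) :
    Feasible A B X0 U (N - i) (traj A B x u i) (fun σ => u (i + σ)) := by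
  refine ⟨fun τ hτ => hu.1 (i + τ) (by omega), fun τ hτ => ?_⟩
  rw [traj_add]
  exact hu.2 (i + τ) (by omega)

lemma Feasible.traj_mem {N : ℕ} {x : Fin n → ℝ} {u : ℕ → Fin m → ℝ}
    (hu : Feasible A B X0 U N x u) (hx : x ∈ X0) {τ : ℕ} (hτ : τ ≤ N) :
    traj A B x u τ ∈ X0 := by
  cases τ with
  | zero => exact hx
  | succ τ => exact hu.2 τ hτ

lemma Feasible.splice {i M : ℕ} {x : Fin n → ℝ} {u w : ℕ → Fin m → ℝ}
    (hu : Feasible A B X0 U i x u) (hw : Feasible A B X0 U M (traj A B x u i) w) :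
    Feasible A B X0 U (i + M) x (splice u w i) := by
  constructor
  · intro τ hτ
    by_cases h : τ < i
    · simpa [_root_.splice, h] using hu.1 τ h
    · simpa [_root_.splice, h] using hw.1 (τ - i) (by omega)
  · intro τ hτ
    by_cases h : τ < i
    · rw [traj_splice_of_le (by omega)]
      exact hu.2 τ h
    · obtain ⟨σ, rfl⟩ : ∃ σ, τ = i + σ := ⟨τ - i, by omega⟩
      rw [Nat.add_assoc, traj_splice_add]
      exact hw.2 σ (by omega)

lemma Vopt_le_cost (hP : P.PosSemidef) (hQ : Q.PosSemidef) {N : ℕ} {x : Fin n → ℝ}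
    {u : ℕ → Fin m → ℝ} (hu : Feasible A B X0 U N x u) :
    Vopt A B P Q X0 U N x ≤ cost A B P Q N x u :=
  csInf_le ⟨0, by rintro _ ⟨w, -, rfl⟩; exact cost_nonneg A B P Q hP hQ N x w⟩ ⟨u, hu, rfl⟩

lemma Vopt_add_le (hP : P.PosSemidef) (hQ : Q.PosSemidef) {i M : ℕ} {x : Fin n → ℝ}
    {u w : ℕ → Fin m → ℝ} (hu : Feasible A B X0 U i x u)
    (hw : Feasible A B X0 U M (traj A B x u i) w) :
    Vopt A B P Q X0 U (i + M) x
      ≤ (∑ τ ∈ range i, (qf P (traj A B x u τ) + qf Q (u τ)))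
        + cost A B P Q M (traj A B x u i) w :=
  cost_splice i M x u w ▸ Vopt_le_cost hP hQ (hu.splice hw)

/-- Bellman's principle of optimality. -/
lemma IsOptimal.shift (hP : P.PosSemidef) (hQ : Q.PosSemidef) {N : ℕ} {x : Fin n → ℝ}
    {u : ℕ → Fin m → ℝ} (hu : IsOptimal A B P Q X0 U N x u) {i : ℕ} (hi : i ≤ N) :
    IsOptimal A B P Q X0 U (N - i) (traj A B x u i) (fun σ => u (i + σ)) := by
  have hfeas := hu.1.shift i
  refine ⟨hfeas, le_antisymm ?_ (Vopt_le_cost hP hQ hfeas)⟩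
  refine le_csInf ⟨_, _, hfeas, rfl⟩ ?_
  rintro _ ⟨w, hw, rfl⟩
  have hsplice := Vopt_add_le hP hQ (hu.1.mono hi) hw
  have hsplit := cost_add A B P Q i (N - i) x u
  rw [Nat.add_sub_cancel' hi] at hsplice hsplit
  linarith [hu.2]

end OpenLoop

section Lyapunov

variable {n m : ℕ} (A : Matrix (Fin n) (Fin n) ℝ) (B : Matrix (Fin n) (Fin m) ℝ)
  (K : Matrix (Fin m) (Fin n) ℝ) {Qb Pb : Matrix (Fin n) (Fin n) ℝ}

lemma qf_closedLoop (hLyap : (A + B * K)ᵀ * Pb * (A + B * K) - Pb = -Qb) (v : Fin n → ℝ) :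
    qf Pb ((A + B * K) *ᵥ v) = qf Pb v - qf Qb v := by
  rw [qf_mulVec, sub_eq_iff_eq_add.mp hLyap, qf_add, qf_neg]
  ring

lemma qf_closedLoop_le (hQb : Qb.PosSemidef)
    (hLyap : (A + B * K)ᵀ * Pb * (A + B * K) - Pb = -Qb) (v : Fin n → ℝ) :
    qf Pb ((A + B * K) *ᵥ v) ≤ qf Pb v := by
  linarith [qf_closedLoop A B K hLyap v, qf_nonneg hQb v]

lemma lamParam_lt_one (hn : 0 < n) (hQb : Qb.PosDef) (hPb : Pb.PosDef) :
    lamParam Qb Pb < 1 := by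
  have := div_pos (lamMin_pos hn hQb) (lamMax_pos hn hPb)
  rw [lamParam]
  linarith

lemma lamParam_nonneg (hn : 0 < n) (hQb : Qb.PosDef) (hPb : Pb.PosDef)
    (hLyap : (A + B * K)ᵀ * Pb * (A + B * K) - Pb = -Qb) : 0 ≤ lamParam Qb Pb := by
  have hQb_le : ∀ v, qf Qb v ≤ qf Pb v := fun v => by
    linarith [qf_closedLoop A B K hLyap v, qf_nonneg hPb.posSemidef ((A + B * K) *ᵥ v)]
  have := (div_le_one (lamMax_pos hn hPb)).mpr
    (lamMin_le_lamMax_of_qf_le hn hQb.1 hPb.1 hQb_le)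
  rw [lamParam]
  linarith

lemma qf_closedLoop_le_lamParam_mul (hn : 0 < n) (hQb : Qb.PosDef) (hPb : Pb.PosDef)
    (hLyap : (A + B * K)ᵀ * Pb * (A + B * K) - Pb = -Qb) (v : Fin n → ℝ) :
    qf Pb ((A + B * K) *ᵥ v) ≤ lamParam Qb Pb * qf Pb v := by
  have hPb_le := qf_le_lamMax_mul hPb.1 v
  have hQb_ge := lamMin_mul_le_qf hQb.1 v
  have hmax := lamMax_pos hn hPb
  have : lamMin Qb / lamMax Pb * qf Pb v ≤ qf Qb v := by
    rw [div_mul_eq_mul_div, div_le_iff₀ hmax]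
    nlinarith [lamMin_pos hn hQb]
  rw [qf_closedLoop A B K hLyap, lamParam]
  linarith

lemma qf_closedLoop_pow_le (hn : 0 < n) (hQb : Qb.PosDef) (hPb : Pb.PosDef)
    (hLyap : (A + B * K)ᵀ * Pb * (A + B * K) - Pb = -Qb) (v : Fin n → ℝ) (τ : ℕ) :
    qf Pb ((A + B * K) ^ τ *ᵥ v) ≤ lamParam Qb Pb ^ τ * qf Pb v := by
  induction τ with
  | zero => simp
  | succ τ ih =>
    rw [pow_succ', ← mulVec_mulVec, pow_succ', mul_assoc]
    exact (qf_closedLoop_le_lamParam_mul A B K hn hQb hPb hLyap _).trans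
      (mul_le_mul_of_nonneg_left ih (lamParam_nonneg A B K hn hQb hPb hLyap))

lemma traj_feedback (x : Fin n → ℝ) (τ : ℕ) :
    traj A B x (fun σ => K *ᵥ ((A + B * K) ^ σ *ᵥ x)) τ = (A + B * K) ^ τ *ᵥ x := by
  induction τ with
  | zero => simp [traj]
  | succ τ ih =>
    rw [traj, ih, pow_succ', ← mulVec_mulVec, add_mulVec, ← mulVec_mulVec]

end Lyapunov

structure IsRHCSetup {n m : ℕ} (A : Matrix (Fin n) (Fin n) ℝ) (B : Matrix (Fin n) (Fin m) ℝ)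
    (K : Matrix (Fin m) (Fin n) ℝ) (Qb Pb P : Matrix (Fin n) (Fin n) ℝ)
    (Q : Matrix (Fin m) (Fin m) ℝ) : Prop where
  pos_dim : 0 < n
  posDef_Qb : Qb.PosDef
  posDef_Pb : Pb.PosDef
  lyapunov : (A + B * K)ᵀ * Pb * (A + B * K) - Pb = -Qb
  posDef_P : P.PosDef
  posDef_Q : Q.PosDef

namespace IsRHCSetup

variable {n m : ℕ} {A : Matrix (Fin n) (Fin n) ℝ} {B : Matrix (Fin n) (Fin m) ℝ}
  {K : Matrix (Fin m) (Fin n) ℝ} {Qb Pb P : Matrix (Fin n) (Fin n) ℝ}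
  {Q : Matrix (Fin m) (Fin m) ℝ}

lemma lamParam_nonneg (h : IsRHCSetup A B K Qb Pb P Q) : 0 ≤ lamParam Qb Pb :=
  _root_.lamParam_nonneg A B K h.pos_dim h.posDef_Qb h.posDef_Pb h.lyapunov

lemma lamParam_lt_one (h : IsRHCSetup A B K Qb Pb P Q) : lamParam Qb Pb < 1 :=
  _root_.lamParam_lt_one h.pos_dim h.posDef_Qb h.posDef_Pb

lemma qf_le_qf_add_feedback (h : IsRHCSetup A B K Qb Pb P Q) (v : Fin n → ℝ) :
    qf P v ≤ qf (P + Kᵀ * Q * K) v := by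
  rw [qf_add]
  linarith [qf_nonneg (h.posDef_Q.posSemidef.transpose_mul_mul_same K) v]

lemma lamMin_le_lamMax_add_feedback (h : IsRHCSetup A B K Qb Pb P Q) :
    lamMin P ≤ lamMax (P + Kᵀ * Q * K) :=
  lamMin_le_lamMax_of_qf_le h.pos_dim h.posDef_P.1
    (h.posDef_P.1.add (h.posDef_Q.posSemidef.transpose_mul_mul_same K).1)
    h.qf_le_qf_add_feedback

/-- `λ_min(P) ≤ C`, where `φ_M = C · (1 + λ + ⋯ + λ^M)`. -/
lemma lamMin_le_phi_coeff (h : IsRHCSetup A B K Qb Pb P Q) :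
    lamMin P ≤ lamMax Pb * lamMax (P + Kᵀ * Q * K) / lamMin Pb := by
  have hPb := lamMin_pos h.pos_dim h.posDef_Pb
  have hPb_le := lamMin_le_lamMax_of_qf_le h.pos_dim h.posDef_Pb.1 h.posDef_Pb.1 fun _ => le_rfl
  rw [le_div_iff₀ hPb]
  nlinarith [h.lamMin_le_lamMax_add_feedback, lamMin_pos h.pos_dim h.posDef_P]

lemma phi_eq_mul_sum (h : IsRHCSetup A B K Qb Pb P Q) (M : ℕ) :
    phi Qb Pb P Q K M = lamMax Pb * lamMax (P + Kᵀ * Q * K) / lamMin Pb *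
      ∑ τ ∈ range (M + 1), lamParam Qb Pb ^ τ := by
  rw [phi, geom_sum_eq h.lamParam_lt_one.ne]
  congr 1
  rw [← neg_div_neg_eq, neg_sub, neg_sub]

lemma lamMin_le_phi (h : IsRHCSetup A B K Qb Pb P Q) (M : ℕ) :
    lamMin P ≤ phi Qb Pb P Q K M := by
  have hsum : 1 ≤ ∑ τ ∈ range (M + 1), lamParam Qb Pb ^ τ := by
    rw [sum_range_succ']
    simpa using sum_nonneg fun τ (_ : τ ∈ range M) => pow_nonneg h.lamParam_nonneg (τ + 1)
  rw [h.phi_eq_mul_sum]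
  exact h.lamMin_le_phi_coeff.trans (le_mul_of_one_le_right
    ((lamMin_pos h.pos_dim h.posDef_P).le.trans h.lamMin_le_phi_coeff) hsum)

lemma phi_pos (h : IsRHCSetup A B K Qb Pb P Q) (M : ℕ) : 0 < phi Qb Pb P Q K M :=
  (lamMin_pos h.pos_dim h.posDef_P).trans_le (h.lamMin_le_phi M)

lemma phi_le_phiInf (h : IsRHCSetup A B K Qb Pb P Q) (M : ℕ) :
    phi Qb Pb P Q K M ≤ phiInf Qb Pb P Q K := by
  have hlam := h.lamParam_lt_one
  have hcoeff := (lamMin_pos h.pos_dim h.posDef_P).le.trans h.lamMin_le_phi_coeff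
  rw [phi, phiInf, ← div_div,
    div_eq_mul_one_div (lamMax Pb * lamMax (P + Kᵀ * Q * K) / lamMin Pb)]
  refine mul_le_mul_of_nonneg_left (div_le_div_of_nonneg_right ?_ (by linarith)) hcoeff
  linarith [pow_nonneg h.lamParam_nonneg (M + 1)]

lemma decayFactor_nonneg (h : IsRHCSetup A B K Qb Pb P Q) (M : ℕ) :
    0 ≤ 1 - lamMin P / phi Qb Pb P Q K M :=
  sub_nonneg.mpr ((div_le_one (h.phi_pos M)).mpr (h.lamMin_le_phi M))

lemma decayFactor_le_one (h : IsRHCSetup A B K Qb Pb P Q) (M : ℕ) :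
    1 - lamMin P / phi Qb Pb P Q K M ≤ 1 :=
  sub_le_self _ (div_nonneg (lamMin_pos h.pos_dim h.posDef_P).le (h.phi_pos M).le)

lemma decayFactor_le_chiC (h : IsRHCSetup A B K Qb Pb P Q) (M : ℕ) :
    1 - lamMin P / phi Qb Pb P Q K M ≤ chiC Qb Pb P Q K :=
  sub_le_sub_left (div_le_div_of_nonneg_left (lamMin_pos h.pos_dim h.posDef_P).le
    (h.phi_pos M) (h.phi_le_phiInf M)) 1

lemma chiC_nonneg (h : IsRHCSetup A B K Qb Pb P Q) : 0 ≤ chiC Qb Pb P Q K :=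
  (h.decayFactor_nonneg 0).trans (h.decayFactor_le_chiC 0)

lemma posSemidef_terminalWeight (h : IsRHCSetup A B K Qb Pb P Q) :
    (Kᵀ * Q * K + (A + B * K)ᵀ * P * (A + B * K)).PosSemidef :=
  (h.posDef_Q.posSemidef.transpose_mul_mul_same K).add
    (h.posDef_P.posSemidef.transpose_mul_mul_same (A + B * K))

lemma psiC_nonneg (h : IsRHCSetup A B K Qb Pb P Q) : 0 ≤ psiC P (A + B * K) Q K :=
  div_nonneg (lamMax_nonneg h.pos_dim h.posSemidef_terminalWeight)
    (lamMin_pos h.pos_dim h.posDef_P).le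

lemma qf_terminalWeight_le (h : IsRHCSetup A B K Qb Pb P Q) (v : Fin n → ℝ) :
    qf (Kᵀ * Q * K + (A + B * K)ᵀ * P * (A + B * K)) v ≤ psiC P (A + B * K) Q K * qf P v := by
  have hP := lamMin_pos h.pos_dim h.posDef_P
  rw [psiC, div_mul_eq_mul_div, le_div_iff₀ hP]
  nlinarith [qf_le_lamMax_mul h.posSemidef_terminalWeight.1 v, lamMin_mul_le_qf h.posDef_P.1 v,
    lamMax_nonneg h.pos_dim h.posSemidef_terminalWeight]

lemma alphaC_nonneg (h : IsRHCSetup A B K Qb Pb P Q) (M : ℕ) :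
    0 ≤ alphaC Qb Pb P (A + B * K) Q K M :=
  mul_nonneg h.psiC_nonneg (prod_nonneg fun κ _ => h.decayFactor_nonneg (κ + 1))

lemma alphaC_antitone (h : IsRHCSetup A B K Qb Pb P Q) :
    Antitone (alphaC Qb Pb P (A + B * K) Q K) := by
  intro M M' hM
  refine mul_le_mul_of_nonneg_left ?_ h.psiC_nonneg
  rw [range_eq_Ico, range_eq_Ico, ← prod_Ico_consecutive _ (Nat.zero_le M) hM]
  exact mul_le_of_le_one_right (prod_nonneg fun κ _ => h.decayFactor_nonneg (κ + 1))
    (prod_le_one (fun κ _ => h.decayFactor_nonneg (κ + 1)) fun κ _ => h.decayFactor_le_one _)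

lemma gammaNS_nonneg (h : IsRHCSetup A B K Qb Pb P Q) (N S : ℕ) : 0 ≤ gammaNS Qb Pb P (A + B * K) Q K N S :=
  mul_nonneg h.chiC_nonneg (le_max_of_le_left (by linarith [h.alphaC_nonneg (N - S - 1)]))

lemma chiC_pow_mul_le_gammaNS_pow (h : IsRHCSetup A B K Qb Pb P Q) (N S : ℕ) {k : ℕ} {E : ℝ}
    (hE : E ≤ (1 + alphaC Qb Pb P (A + B * K) Q K (N - S - 1)) ^ k) :
    chiC Qb Pb P Q K ^ k * E ≤ gammaNS Qb Pb P (A + B * K) Q K N S ^ k := by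
  have hG : 0 ≤ 1 + alphaC Qb Pb P (A + B * K) Q K (N - S - 1) := by
    linarith [h.alphaC_nonneg (N - S - 1)]
  calc chiC Qb Pb P Q K ^ k * E
      ≤ (chiC Qb Pb P Q K * (1 + alphaC Qb Pb P (A + B * K) Q K (N - S - 1))) ^ k := by
        rw [mul_pow]
        exact mul_le_mul_of_nonneg_left hE (pow_nonneg h.chiC_nonneg k)
    _ ≤ gammaNS Qb Pb P (A + B * K) Q K N S ^ k :=
        pow_le_pow_left₀ (mul_nonneg h.chiC_nonneg hG)
          (mul_le_mul_of_nonneg_left (le_max_left _ _) h.chiC_nonneg) k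

end IsRHCSetup

lemma Vopt_succ_le_cost_add {n m : ℕ} {A : Matrix (Fin n) (Fin n) ℝ}
    {B : Matrix (Fin n) (Fin m) ℝ} {K : Matrix (Fin m) (Fin n) ℝ} {P : Matrix (Fin n) (Fin n) ℝ}
    {Q : Matrix (Fin m) (Fin m) ℝ} {X0 : Set (Fin n → ℝ)} {U : Set (Fin m → ℝ)}
    (hP : P.PosSemidef) (hQ : Q.PosSemidef) (hinv : Set.MapsTo ((A + B * K) *ᵥ ·) X0 X0)
    (hKU : Set.MapsTo (K *ᵥ ·) X0 U) {N : ℕ} {x : Fin n → ℝ} {u : ℕ → Fin m → ℝ}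
    (hu : Feasible A B X0 U N x u) (hx : x ∈ X0) :
    Vopt A B P Q X0 U (N + 1) x ≤ cost A B P Q N x u
      + qf (Kᵀ * Q * K + (A + B * K)ᵀ * P * (A + B * K)) (traj A B x u N) := by
  set T := traj A B x u N
  have hT : T ∈ X0 := hu.traj_mem hx le_rfl
  have hclosed : A *ᵥ T + B *ᵥ (K *ᵥ T) = (A + B * K) *ᵥ T := by
    rw [add_mulVec, mulVec_mulVec]
  have hfeedback : Feasible A B X0 U 1 T (fun _ => K *ᵥ T) :=
    ⟨fun _ _ => hKU hT, fun τ hτ => by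
      obtain rfl : τ = 0 := by omega
      show A *ᵥ T + B *ᵥ (K *ᵥ T) ∈ X0
      exact hclosed ▸ hinv hT⟩
  have hcost : cost A B P Q 1 T (fun _ => K *ᵥ T) = qf P T + qf Q (K *ᵥ T) + qf P ((A + B * K) *ᵥ T) := by
    simp only [cost, traj, sum_range_one, hclosed]
  have := Vopt_add_le hP hQ hu hfeedback
  rw [hcost] at this
  rw [qf_add, ← qf_mulVec, ← qf_mulVec, cost]
  linarith

namespace IsRHCSetup

variable {n m : ℕ} {A : Matrix (Fin n) (Fin n) ℝ} {B : Matrix (Fin n) (Fin m) ℝ}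
  {K : Matrix (Fin m) (Fin n) ℝ} {Qb Pb P : Matrix (Fin n) (Fin n) ℝ}
  {Q : Matrix (Fin m) (Fin m) ℝ} {X0 : Set (Fin n → ℝ)} {U : Set (Fin m → ℝ)}

lemma qf_feedback_le (h : IsRHCSetup A B K Qb Pb P Q) (x : Fin n → ℝ) (τ : ℕ) :
    qf (P + Kᵀ * Q * K) ((A + B * K) ^ τ *ᵥ x)
      ≤ lamMax Pb * lamMax (P + Kᵀ * Q * K) / lamMin Pb * (lamParam Qb Pb ^ τ * (x ⬝ᵥ x)) := by
  set v := (A + B * K) ^ τ *ᵥ x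
  have hPb := lamMin_pos h.pos_dim h.posDef_Pb
  have hmax := (lamMin_pos h.pos_dim h.posDef_P).le.trans h.lamMin_le_lamMax_add_feedback
  have hv : v ⬝ᵥ v ≤ qf Pb v / lamMin Pb := by
    rw [le_div_iff₀ hPb]
    linarith [lamMin_mul_le_qf h.posDef_Pb.1 v]
  have hdecay : qf Pb v ≤ lamParam Qb Pb ^ τ * (lamMax Pb * (x ⬝ᵥ x)) :=
    (qf_closedLoop_pow_le A B K h.pos_dim h.posDef_Qb h.posDef_Pb h.lyapunov x τ).trans
      (mul_le_mul_of_nonneg_left (qf_le_lamMax_mul h.posDef_Pb.1 x)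
        (pow_nonneg h.lamParam_nonneg τ))
  calc qf (P + Kᵀ * Q * K) v ≤ lamMax (P + Kᵀ * Q * K) * (v ⬝ᵥ v) :=
        qf_le_lamMax_mul (h.posDef_P.1.add (h.posDef_Q.posSemidef.transpose_mul_mul_same K).1) v
    _ ≤ lamMax (P + Kᵀ * Q * K) * (lamParam Qb Pb ^ τ * (lamMax Pb * (x ⬝ᵥ x)) / lamMin Pb) := by
        gcongr
        exact hv.trans (div_le_div_of_nonneg_right hdecay hPb.le)
    _ = _ := by ring

/-- Witness: the feedback plan `u(τ) = K Ā^τ x`. -/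
lemma exists_feasible_cost_le (h : IsRHCSetup A B K Qb Pb P Q)
    (hinv : Set.MapsTo ((A + B * K) *ᵥ ·) X0 X0) (hKU : Set.MapsTo (K *ᵥ ·) X0 U)
    {x : Fin n → ℝ} (hx : x ∈ X0) (M : ℕ) :
    ∃ w, Feasible A B X0 U M x w ∧ cost A B P Q M x w ≤ phi Qb Pb P Q K M * (x ⬝ᵥ x) := by
  have hmem : ∀ τ, (A + B * K) ^ τ *ᵥ x ∈ X0 := fun τ => by
    induction τ with
    | zero => simpa using hx
    | succ τ ih => rw [pow_succ', ← mulVec_mulVec]; exact hinv ih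
  have hstage : ∀ v, qf P v + qf Q (K *ᵥ v) = qf (P + Kᵀ * Q * K) v := fun v => by
    rw [qf_add, qf_mulVec]
  refine ⟨fun σ => K *ᵥ ((A + B * K) ^ σ *ᵥ x),
    ⟨fun τ _ => hKU (hmem τ), fun τ _ => traj_feedback A B K x (τ + 1) ▸ hmem (τ + 1)⟩, ?_⟩
  calc cost A B P Q M x (fun σ => K *ᵥ ((A + B * K) ^ σ *ᵥ x))
      = ∑ τ ∈ range M, qf (P + Kᵀ * Q * K) ((A + B * K) ^ τ *ᵥ x)
        + qf P ((A + B * K) ^ M *ᵥ x) := by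
        simp only [cost, traj_feedback, hstage]
    _ ≤ ∑ τ ∈ range (M + 1), qf (P + Kᵀ * Q * K) ((A + B * K) ^ τ *ᵥ x) := by
        rw [sum_range_succ]
        gcongr
        exact h.qf_le_qf_add_feedback _
    _ ≤ ∑ τ ∈ range (M + 1), lamMax Pb * lamMax (P + Kᵀ * Q * K) / lamMin Pb *
          (lamParam Qb Pb ^ τ * (x ⬝ᵥ x)) :=
        sum_le_sum fun τ _ => h.qf_feedback_le x τ
    _ = phi Qb Pb P Q K M * (x ⬝ᵥ x) := by
        rw [h.phi_eq_mul_sum, ← mul_sum, ← sum_mul, mul_assoc]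

lemma Vopt_le_phi_mul (h : IsRHCSetup A B K Qb Pb P Q)
    (hinv : Set.MapsTo ((A + B * K) *ᵥ ·) X0 X0) (hKU : Set.MapsTo (K *ᵥ ·) X0 U)
    {x : Fin n → ℝ} (hx : x ∈ X0) (M : ℕ) :
    Vopt A B P Q X0 U M x ≤ phi Qb Pb P Q K M * (x ⬝ᵥ x) := by
  obtain ⟨w, hw, hcost⟩ := h.exists_feasible_cost_le hinv hKU hx M
  exact (Vopt_le_cost h.posDef_P.posSemidef h.posDef_Q.posSemidef hw).trans hcost

end IsRHCSetup

namespace IsOptimal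

variable {n m : ℕ} {A : Matrix (Fin n) (Fin n) ℝ} {B : Matrix (Fin n) (Fin m) ℝ}
  {K : Matrix (Fin m) (Fin n) ℝ} {Qb Pb P : Matrix (Fin n) (Fin n) ℝ}
  {Q : Matrix (Fin m) (Fin m) ℝ} {X0 : Set (Fin n → ℝ)} {U : Set (Fin m → ℝ)}
  {N : ℕ} {x : Fin n → ℝ} {u : ℕ → Fin m → ℝ}

/-- The stage cost `xᵀPx ≥ λ_min(P)|x|²` is at least a fraction `λ_min(P)/φ_N` of the optimal
cost `V_N(x) ≤ φ_N |x|²`, so dropping it shrinks the cost by that fraction. -/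
lemma cost_shift_one_le (hu : IsOptimal A B P Q X0 U (N + 1) x u)
    (h : IsRHCSetup A B K Qb Pb P Q) (hinv : Set.MapsTo ((A + B * K) *ᵥ ·) X0 X0)
    (hKU : Set.MapsTo (K *ᵥ ·) X0 U) (hx : x ∈ X0) :
    cost A B P Q N (traj A B x u 1) (fun σ => u (1 + σ))
      ≤ (1 - lamMin P / phi Qb Pb P Q K (N + 1)) * cost A B P Q (N + 1) x u := by
  have hsplit := cost_add A B P Q 1 N x u
  rw [Nat.add_comm 1 N, sum_range_one] at hsplit
  have hphi := h.phi_pos (N + 1)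
  have hcost : cost A B P Q (N + 1) x u ≤ phi Qb Pb P Q K (N + 1) * (x ⬝ᵥ x) :=
    hu.2 ▸ h.Vopt_le_phi_mul hinv hKU hx (N + 1)
  have hfrac : lamMin P / phi Qb Pb P Q K (N + 1) * cost A B P Q (N + 1) x u ≤ qf P x :=
    calc _ ≤ lamMin P / phi Qb Pb P Q K (N + 1) * (phi Qb Pb P Q K (N + 1) * (x ⬝ᵥ x)) :=
          mul_le_mul_of_nonneg_left hcost
            (div_nonneg (lamMin_pos h.pos_dim h.posDef_P).le hphi.le)
      _ = lamMin P * (x ⬝ᵥ x) := by field_simp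
      _ ≤ qf P x := lamMin_mul_le_qf h.posDef_P.1 x
  have hQ := qf_nonneg h.posDef_Q.posSemidef (u 0)
  simp only [traj] at hsplit ⊢
  linarith

lemma cost_shift_le_prod (hu : IsOptimal A B P Q X0 U N x u)
    (h : IsRHCSetup A B K Qb Pb P Q) (hinv : Set.MapsTo ((A + B * K) *ᵥ ·) X0 X0)
    (hKU : Set.MapsTo (K *ᵥ ·) X0 U) (hx : x ∈ X0) {d : ℕ} (hd : d ≤ N) :
    cost A B P Q (N - d) (traj A B x u d) (fun σ => u (d + σ))
      ≤ (∏ κ ∈ range d, (1 - lamMin P / phi Qb Pb P Q K (N - κ))) * cost A B P Q N x u := by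
  induction d with
  | zero => simp [traj]
  | succ d ih =>
    have hshift := hu.shift h.posDef_P.posSemidef h.posDef_Q.posSemidef
      (i := d) (by omega)
    rw [show N - d = N - (d + 1) + 1 by omega] at hshift
    have hstep := hshift.cost_shift_one_le h hinv hKU (hu.1.traj_mem hx (by omega))
    rw [traj_add, ← show N - d = N - (d + 1) + 1 by omega] at hstep
    simp only [← Nat.add_assoc] at hstep
    rw [prod_range_succ, mul_comm _ (1 - _), mul_assoc]
    exact hstep.trans (mul_le_mul_of_nonneg_left (ih (by omega)) (h.decayFactor_nonneg _))

lemma cost_shift_le_chiC_pow (hu : IsOptimal A B P Q X0 U N x u)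
    (h : IsRHCSetup A B K Qb Pb P Q) (hinv : Set.MapsTo ((A + B * K) *ᵥ ·) X0 X0)
    (hKU : Set.MapsTo (K *ᵥ ·) X0 U) (hx : x ∈ X0) {d : ℕ} (hd : d ≤ N) :
    cost A B P Q (N - d) (traj A B x u d) (fun σ => u (d + σ))
      ≤ chiC Qb Pb P Q K ^ d * cost A B P Q N x u := by
  refine (hu.cost_shift_le_prod h hinv hKU hx hd).trans
    (mul_le_mul_of_nonneg_right ?_ (cost_nonneg A B P Q h.posDef_P.posSemidef
      h.posDef_Q.posSemidef N x u))
  simpa using prod_le_prod (fun κ _ => h.decayFactor_nonneg (N - κ))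
    fun κ (_ : κ ∈ range d) => h.decayFactor_le_chiC (N - κ)

lemma qf_traj_le (hu : IsOptimal A B P Q X0 U N x u)
    (h : IsRHCSetup A B K Qb Pb P Q) (hinv : Set.MapsTo ((A + B * K) *ᵥ ·) X0 X0)
    (hKU : Set.MapsTo (K *ᵥ ·) X0 U) (hx : x ∈ X0) :
    qf P (traj A B x u N)
      ≤ (∏ κ ∈ range N, (1 - lamMin P / phi Qb Pb P Q K (κ + 1))) * cost A B P Q N x u := by
  have hreflect : ∏ κ ∈ range N, (1 - lamMin P / phi Qb Pb P Q K (N - κ))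
      = ∏ κ ∈ range N, (1 - lamMin P / phi Qb Pb P Q K (κ + 1)) := by
    rw [← prod_range_reflect (fun κ => 1 - lamMin P / phi Qb Pb P Q K (κ + 1))]
    refine prod_congr rfl fun κ hκ => ?_
    rw [show N - 1 - κ + 1 = N - κ by grind]
  have := hu.cost_shift_le_prod h hinv hKU hx le_rfl
  rwa [Nat.sub_self, cost_zero, hreflect] at this

lemma Vopt_succ_le (hu : IsOptimal A B P Q X0 U N x u)
    (h : IsRHCSetup A B K Qb Pb P Q) (hinv : Set.MapsTo ((A + B * K) *ᵥ ·) X0 X0)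
    (hKU : Set.MapsTo (K *ᵥ ·) X0 U) (hx : x ∈ X0) :
    Vopt A B P Q X0 U (N + 1) x
      ≤ (1 + alphaC Qb Pb P (A + B * K) Q K N) * Vopt A B P Q X0 U N x := by
  have hext := Vopt_succ_le_cost_add h.posDef_P.posSemidef h.posDef_Q.posSemidef hinv hKU hu.1 hx
  have hterm := mul_le_mul_of_nonneg_left (hu.qf_traj_le h hinv hKU hx) h.psiC_nonneg
  rw [hu.2] at hext hterm
  rw [alphaC, add_mul, one_mul, mul_assoc]
  linarith [h.qf_terminalWeight_le (traj A B x u N)]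

end IsOptimal

namespace IsRHCSetup

variable {n m : ℕ} {A : Matrix (Fin n) (Fin n) ℝ} {B : Matrix (Fin n) (Fin m) ℝ}
  {K : Matrix (Fin m) (Fin n) ℝ} {Qb Pb P : Matrix (Fin n) (Fin n) ℝ}
  {Q : Matrix (Fin m) (Fin m) ℝ} {X0 : Set (Fin n → ℝ)} {U : Set (Fin m → ℝ)}

lemma Vopt_add_le_prod (h : IsRHCSetup A B K Qb Pb P Q)
    (hinv : Set.MapsTo ((A + B * K) *ᵥ ·) X0 X0) (hKU : Set.MapsTo (K *ᵥ ·) X0 U)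
    {y : Fin n → ℝ} (hy : y ∈ X0) {p d : ℕ}
    (hatt : ∀ N', p ≤ N' → N' < p + d → ∃ w, IsOptimal A B P Q X0 U N' y w) :
    Vopt A B P Q X0 U (p + d) y
      ≤ (∏ ℓ ∈ Ico p (p + d), (1 + alphaC Qb Pb P (A + B * K) Q K ℓ))
        * Vopt A B P Q X0 U p y := by
  induction d with
  | zero => simp
  | succ d ih =>
    obtain ⟨w, hw⟩ := hatt (p + d) (by omega) (by omega)
    rw [← Nat.add_assoc, prod_Ico_succ_top (by omega), mul_comm _ (1 + _), mul_assoc]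
    exact (hw.Vopt_succ_le h hinv hKU hy).trans (mul_le_mul_of_nonneg_left
      (ih fun N' hp hN' => hatt N' hp (by omega)) (by linarith [h.alphaC_nonneg (p + d)]))

end IsRHCSetup

namespace IsOptimal

variable {n m : ℕ} {A : Matrix (Fin n) (Fin n) ℝ} {B : Matrix (Fin n) (Fin m) ℝ}
  {K : Matrix (Fin m) (Fin n) ℝ} {Qb Pb P : Matrix (Fin n) (Fin n) ℝ}
  {Q : Matrix (Fin m) (Fin m) ℝ} {X0 : Set (Fin n → ℝ)} {U : Set (Fin m → ℝ)}
  {N S d : ℕ} {y : Fin n → ℝ} {u : ℕ → Fin m → ℝ}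

lemma Vopt_traj_succ_le (hu : IsOptimal A B P Q X0 U N y u)
    (h : IsRHCSetup A B K Qb Pb P Q) (hinv : Set.MapsTo ((A + B * K) *ᵥ ·) X0 X0)
    (hKU : Set.MapsTo (K *ᵥ ·) X0 U) (hy : y ∈ X0) (hd : d ≤ S) (hSN : S + 1 ≤ N) :
    Vopt A B P Q X0 U (N - d) (traj A B y u (d + 1))
      ≤ chiC Qb Pb P Q K ^ (d + 1) * (1 + alphaC Qb Pb P (A + B * K) Q K (N - S - 1))
        * Vopt A B P Q X0 U N y := by
  have hshift := hu.shift h.posDef_P.posSemidef h.posDef_Q.posSemidef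
    (i := d + 1) (by omega)
  have hext := hshift.Vopt_succ_le h hinv hKU (hu.1.traj_mem hy (by omega))
  have htail := hu.cost_shift_le_chiC_pow h hinv hKU hy (d := d + 1) (by omega)
  rw [hshift.2, hu.2] at htail
  rw [show N - (d + 1) + 1 = N - d by omega] at hext
  have hα : 1 + alphaC Qb Pb P (A + B * K) Q K (N - (d + 1))
      ≤ 1 + alphaC Qb Pb P (A + B * K) Q K (N - S - 1) :=
    add_le_add_right (h.alphaC_antitone (by omega)) 1
  calc _ ≤ _ := hext
    _ ≤ (1 + alphaC Qb Pb P (A + B * K) Q K (N - S - 1))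
          * (chiC Qb Pb P Q K ^ (d + 1) * Vopt A B P Q X0 U N y) :=
        mul_le_mul hα htail (Vopt_nonneg A B P Q X0 U h.posDef_P.posSemidef
          h.posDef_Q.posSemidef _ _) (by linarith [h.alphaC_nonneg (N - S - 1)])
    _ = _ := by ring

lemma Vopt_sub_traj_succ_le_gammaNS_pow (hu : IsOptimal A B P Q X0 U N y u)
    (h : IsRHCSetup A B K Qb Pb P Q) (hinv : Set.MapsTo ((A + B * K) *ᵥ ·) X0 X0)
    (hKU : Set.MapsTo (K *ᵥ ·) X0 U) (hy : y ∈ X0) (hd : d ≤ S) (hSN : S + 1 ≤ N) :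
    Vopt A B P Q X0 U (N - d) (traj A B y u (d + 1))
      ≤ gammaNS Qb Pb P (A + B * K) Q K N S ^ (d + 1) * Vopt A B P Q X0 U N y :=
  (hu.Vopt_traj_succ_le h hinv hKU hy hd hSN).trans <| mul_le_mul_of_nonneg_right
    (h.chiC_pow_mul_le_gammaNS_pow N S
      (le_self_pow₀ (by linarith [h.alphaC_nonneg (N - S - 1)]) (Nat.succ_ne_zero d)))
    (Vopt_nonneg A B P Q X0 U h.posDef_P.posSemidef h.posDef_Q.posSemidef _ _)

lemma Vopt_traj_succ_le_gammaNS_pow (hu : IsOptimal A B P Q X0 U N y u)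
    (h : IsRHCSetup A B K Qb Pb P Q) (hinv : Set.MapsTo ((A + B * K) *ᵥ ·) X0 X0)
    (hKU : Set.MapsTo (K *ᵥ ·) X0 U) (hy : y ∈ X0) (hd : d ≤ S) (hSN : S + 1 ≤ N)
    (hatt : ∀ N', N - d ≤ N' → N' < N →
      ∃ w, IsOptimal A B P Q X0 U N' (traj A B y u (d + 1)) w) :
    Vopt A B P Q X0 U N (traj A B y u (d + 1))
      ≤ gammaNS Qb Pb P (A + B * K) Q K N S ^ (d + 1) * Vopt A B P Q X0 U N y := by
  set G := 1 + alphaC Qb Pb P (A + B * K) Q K (N - S - 1)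
  have hG : 0 ≤ G := by linarith [h.alphaC_nonneg (N - S - 1)]
  have hprod : ∏ ℓ ∈ Ico (N - d) N, (1 + alphaC Qb Pb P (A + B * K) Q K ℓ) ≤ G ^ d := by
    simpa [show N - (N - d) = d by omega] using prod_le_prod (g := fun _ => G)
      (fun ℓ _ => by linarith [h.alphaC_nonneg ℓ])
      fun ℓ (hℓ : ℓ ∈ Ico (N - d) N) =>
        add_le_add_right (h.alphaC_antitone (by have := (mem_Ico.mp hℓ).1; omega)) 1
  have hext := h.Vopt_add_le_prod hinv hKU (hu.1.traj_mem hy (by omega))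
    (p := N - d) (d := d) fun N' h1 h2 => hatt N' h1 (by omega)
  rw [Nat.sub_add_cancel (by omega)] at hext
  have hV := Vopt_nonneg A B P Q X0 U h.posDef_P.posSemidef h.posDef_Q.posSemidef N y
  calc _ ≤ _ := hext
    _ ≤ G ^ d * (chiC Qb Pb P Q K ^ (d + 1) * G * Vopt A B P Q X0 U N y) :=
        mul_le_mul hprod (hu.Vopt_traj_succ_le h hinv hKU hy hd hSN)
          (Vopt_nonneg A B P Q X0 U h.posDef_P.posSemidef h.posDef_Q.posSemidef _ _)
          (pow_nonneg hG d)
    _ = chiC Qb Pb P Q K ^ (d + 1) * G ^ (d + 1) * Vopt A B P Q X0 U N y := by ring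
    _ ≤ _ := mul_le_mul_of_nonneg_right (h.chiC_pow_mul_le_gammaNS_pow N S le_rfl) hV

lemma stage_le_gammaNS_pow (hu : IsOptimal A B P Q X0 U N y u)
    (h : IsRHCSetup A B K Qb Pb P Q) (hinv : Set.MapsTo ((A + B * K) *ᵥ ·) X0 X0)
    (hKU : Set.MapsTo (K *ᵥ ·) X0 U) (hy : y ∈ X0) (hd : d ≤ S) (hSN : S + 1 ≤ N) :
    qf P (traj A B y u d) + qf Q (u d)
      ≤ gammaNS Qb Pb P (A + B * K) Q K N S ^ d * Vopt A B P Q X0 U N y := by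
  have hstage := qf_add_qf_le_cost A B P Q h.posDef_P.posSemidef h.posDef_Q.posSemidef
    (N - d - 1) (traj A B y u d) (fun σ => u (d + σ))
  simp only [show N - d - 1 + 1 = N - d by omega, add_zero] at hstage
  have htail := hu.cost_shift_le_chiC_pow h hinv hKU hy (d := d) (by omega)
  have hchi : chiC Qb Pb P Q K ^ d ≤ gammaNS Qb Pb P (A + B * K) Q K N S ^ d := by
    simpa using h.chiC_pow_mul_le_gammaNS_pow N S (E := 1)
      (one_le_pow₀ (by linarith [h.alphaC_nonneg (N - S - 1)]))
  rw [hu.2] at htail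
  exact (hstage.trans htail).trans (mul_le_mul_of_nonneg_right hchi
    (Vopt_nonneg A B P Q X0 U h.posDef_P.posSemidef h.posDef_Q.posSemidef N y))

end IsOptimal

/-- `uplan k` is the plan `U_k` computed at time `k`, so `uplan k τ = u(k + τ | k)`, and
`s k` counts the consecutive attacks up to time `k`. -/
structure IsClosedLoop {n m : ℕ} (A : Matrix (Fin n) (Fin n) ℝ) (B : Matrix (Fin n) (Fin m) ℝ)
    (P : Matrix (Fin n) (Fin n) ℝ) (Q : Matrix (Fin m) (Fin m) ℝ)
    (X0 : Set (Fin n → ℝ)) (U : Set (Fin m → ℝ)) (N : ℕ) (ϑ : ℕ → Bool) (s : ℕ → ℕ)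
    (x : ℕ → Fin n → ℝ) (uplan : ℕ → ℕ → Fin m → ℝ) : Prop where
  attack_zero : ϑ 0 = false
  counter_zero : s 0 = 0
  counter_succ : ∀ k, s (k + 1) = if ϑ (k + 1) = true then s k + 1 else 0
  mem : ∀ k, x k ∈ X0
  isOptimal_plan : ∀ k, ϑ k = false → IsOptimal A B P Q X0 U N (x k) (uplan k)
  dynamics : ∀ k, x (k + 1) = A *ᵥ x k + B *ᵥ uplan (k - s k) (s k)

namespace IsClosedLoop

variable {n m : ℕ} {A : Matrix (Fin n) (Fin n) ℝ} {B : Matrix (Fin n) (Fin m) ℝ}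
  {K : Matrix (Fin m) (Fin n) ℝ} {Qb Pb P : Matrix (Fin n) (Fin n) ℝ}
  {Q : Matrix (Fin m) (Fin m) ℝ} {X0 : Set (Fin n → ℝ)} {U : Set (Fin m → ℝ)}
  {S N : ℕ} {ϑ : ℕ → Bool} {s : ℕ → ℕ} {x : ℕ → Fin n → ℝ} {uplan : ℕ → ℕ → Fin m → ℝ}

lemma counter_le (hcl : IsClosedLoop A B P Q X0 U N ϑ s x uplan) (k : ℕ) : s k ≤ k := by
  induction k with
  | zero => simp [hcl.counter_zero]
  | succ k ih => rw [hcl.counter_succ k]; split <;> omega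

lemma counter_sub (hcl : IsClosedLoop A B P Q X0 U N ϑ s x uplan) {k d : ℕ} (hd : d ≤ s k) :
    s (k - d) = s k - d := by
  induction d with
  | zero => rfl
  | succ d ih =>
    have hsd := ih (by omega)
    obtain ⟨e, he⟩ : ∃ e, k - d = e + 1 := ⟨k - d - 1, by
      have := hcl.counter_le (k - d); omega⟩
    have hsucc := hcl.counter_succ e
    rw [← he] at hsucc
    split at hsucc <;> rw [show k - (d + 1) = e by omega] <;> omega

lemma attack_sub_counter_eq_false (hcl : IsClosedLoop A B P Q X0 U N ϑ s x uplan) (k : ℕ) :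
    ϑ (k - s k) = false := by
  cases hj : k - s k with
  | zero => exact hcl.attack_zero
  | succ j =>
    have hsucc := hcl.counter_succ j
    rw [← hj, hcl.counter_sub le_rfl, Nat.sub_self] at hsucc
    split at hsucc <;> simp_all

lemma isOptimal_plan_sub_counter (hcl : IsClosedLoop A B P Q X0 U N ϑ s x uplan) (k : ℕ) :
    IsOptimal A B P Q X0 U N (x (k - s k)) (uplan (k - s k)) :=
  hcl.isOptimal_plan _ (hcl.attack_sub_counter_eq_false k)

lemma eq_traj (hcl : IsClosedLoop A B P Q X0 U N ϑ s x uplan) {k d : ℕ} (hd : d ≤ s k + 1) :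
    x (k - s k + d) = traj A B (x (k - s k)) (uplan (k - s k)) d := by
  induction d with
  | zero => rfl
  | succ d ih =>
    have hsd : s (k - s k + d) = d := by
      have := hcl.counter_sub (k := k) (d := s k - d) (by omega)
      rwa [show k - (s k - d) = k - s k + d by have := hcl.counter_le k; omega,
        show s k - (s k - d) = d by omega] at this
    rw [← Nat.add_assoc, hcl.dynamics, hsd, Nat.add_sub_cancel, ih (by omega)]
    rfl

lemma eq_traj_succ (hcl : IsClosedLoop A B P Q X0 U N ϑ s x uplan) (k : ℕ) :
    x (k + 1) = traj A B (x (k - s k)) (uplan (k - s k)) (s k + 1) := by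
  rw [← hcl.eq_traj le_rfl, show k - s k + (s k + 1) = k + 1 by have := hcl.counter_le k; omega]

lemma eq_traj_self (hcl : IsClosedLoop A B P Q X0 U N ϑ s x uplan) (k : ℕ) :
    x k = traj A B (x (k - s k)) (uplan (k - s k)) (s k) := by
  rw [← hcl.eq_traj (by omega), Nat.sub_add_cancel (hcl.counter_le k)]

lemma Vopt_le_gammaNS_pow_of_attack_eq_false (hcl : IsClosedLoop A B P Q X0 U N ϑ s x uplan)
    (h : IsRHCSetup A B K Qb Pb P Q) (hinv : Set.MapsTo ((A + B * K) *ᵥ ·) X0 X0)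
    (hKU : Set.MapsTo (K *ᵥ ·) X0 U) (hsS : ∀ k, s k ≤ S) (hSN : S + 1 ≤ N)
    (hatt : ∀ k N', N - S ≤ N' → N' ≤ N → ∃ w, IsOptimal A B P Q X0 U N' (x k) w)
    {k : ℕ} (hk : ϑ k = false) :
    Vopt A B P Q X0 U N (x k)
      ≤ gammaNS Qb Pb P (A + B * K) Q K N S ^ k * Vopt A B P Q X0 U N (x 0) := by
  induction k using Nat.strong_induction_on with
  | _ k ih =>
    cases k with
    | zero => simp
    | succ k =>
      have hbound := (hcl.isOptimal_plan_sub_counter k).Vopt_traj_succ_le_gammaNS_pow h hinv hKU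
        (hcl.mem _) (hsS k) hSN fun N' h1 h2 => hcl.eq_traj_succ k ▸ hatt (k + 1) N'
          (by have := hsS k; omega) h2.le
      rw [← hcl.eq_traj_succ] at hbound
      have hsk := hcl.counter_le k
      calc _ ≤ _ := hbound
        _ ≤ gammaNS Qb Pb P (A + B * K) Q K N S ^ (s k + 1)
            * (gammaNS Qb Pb P (A + B * K) Q K N S ^ (k - s k) * Vopt A B P Q X0 U N (x 0)) :=
          mul_le_mul_of_nonneg_left (ih _ (by omega) (hcl.attack_sub_counter_eq_false k))
            (pow_nonneg (h.gammaNS_nonneg N S) _)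
        _ = _ := by rw [← mul_assoc, ← pow_add, show s k + 1 + (k - s k) = k + 1 by omega]

lemma gammaNS_pow_counter_mul_Vopt_le (hcl : IsClosedLoop A B P Q X0 U N ϑ s x uplan)
    (h : IsRHCSetup A B K Qb Pb P Q) (hinv : Set.MapsTo ((A + B * K) *ᵥ ·) X0 X0)
    (hKU : Set.MapsTo (K *ᵥ ·) X0 U) (hsS : ∀ k, s k ≤ S) (hSN : S + 1 ≤ N)
    (hatt : ∀ k N', N - S ≤ N' → N' ≤ N → ∃ w, IsOptimal A B P Q X0 U N' (x k) w) (k : ℕ) :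
    gammaNS Qb Pb P (A + B * K) Q K N S ^ s k * Vopt A B P Q X0 U N (x (k - s k))
      ≤ gammaNS Qb Pb P (A + B * K) Q K N S ^ k * Vopt A B P Q X0 U N (x 0) := by
  calc _ ≤ gammaNS Qb Pb P (A + B * K) Q K N S ^ s k
        * (gammaNS Qb Pb P (A + B * K) Q K N S ^ (k - s k) * Vopt A B P Q X0 U N (x 0)) :=
        mul_le_mul_of_nonneg_left (hcl.Vopt_le_gammaNS_pow_of_attack_eq_false h hinv hKU hsS hSN
          hatt (hcl.attack_sub_counter_eq_false k)) (pow_nonneg (h.gammaNS_nonneg N S) _)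
    _ = _ := by rw [← mul_assoc, ← pow_add, Nat.add_sub_cancel' (hcl.counter_le k)]

lemma Vopt_sub_counter_pred_le (hcl : IsClosedLoop A B P Q X0 U N ϑ s x uplan)
    (h : IsRHCSetup A B K Qb Pb P Q) (hinv : Set.MapsTo ((A + B * K) *ᵥ ·) X0 X0)
    (hKU : Set.MapsTo (K *ᵥ ·) X0 U) (hsS : ∀ k, s k ≤ S) (hSN : S + 1 ≤ N)
    (hatt : ∀ k N', N - S ≤ N' → N' ≤ N → ∃ w, IsOptimal A B P Q X0 U N' (x k) w) (k : ℕ) :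
    Vopt A B P Q X0 U (N - s (k - 1)) (x k)
      ≤ gammaNS Qb Pb P (A + B * K) Q K N S ^ k * Vopt A B P Q X0 U N (x 0) := by
  cases k with
  | zero => simp [hcl.counter_zero]
  | succ k =>
    have hbound := (hcl.isOptimal_plan_sub_counter k).Vopt_sub_traj_succ_le_gammaNS_pow h hinv hKU
      (hcl.mem _) (hsS k) hSN
    rw [← hcl.eq_traj_succ, pow_succ', mul_assoc] at hbound
    rw [Nat.add_sub_cancel, pow_succ', mul_assoc]
    exact hbound.trans (mul_le_mul_of_nonneg_left
      (hcl.gammaNS_pow_counter_mul_Vopt_le h hinv hKU hsS hSN hatt k) (h.gammaNS_nonneg N S))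

lemma stage_le (hcl : IsClosedLoop A B P Q X0 U N ϑ s x uplan)
    (h : IsRHCSetup A B K Qb Pb P Q) (hinv : Set.MapsTo ((A + B * K) *ᵥ ·) X0 X0)
    (hKU : Set.MapsTo (K *ᵥ ·) X0 U) (hsS : ∀ k, s k ≤ S) (hSN : S + 1 ≤ N)
    (hatt : ∀ k N', N - S ≤ N' → N' ≤ N → ∃ w, IsOptimal A B P Q X0 U N' (x k) w) (k : ℕ) :
    qf P (x k) + qf Q (uplan (k - s k) (s k))
      ≤ gammaNS Qb Pb P (A + B * K) Q K N S ^ k * Vopt A B P Q X0 U N (x 0) := by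
  have hbound := (hcl.isOptimal_plan_sub_counter k).stage_le_gammaNS_pow h hinv hKU
    (hcl.mem _) (hsS k) hSN
  rw [← hcl.eq_traj_self] at hbound
  exact hbound.trans (hcl.gammaNS_pow_counter_mul_Vopt_le h hinv hKU hsS hSN hatt k)

end IsClosedLoop

lemma tsum_le_div_one_sub_of_le_geometric {f : ℕ → ℝ} {γ C : ℝ} (hf : ∀ k, 0 ≤ f k)
    (hfγ : ∀ k, f k ≤ γ ^ k * C) (hγ0 : 0 ≤ γ) (hγ1 : γ < 1) : ∑' k, f k ≤ C / (1 - γ) := by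
  have hgeom := (summable_geometric_of_lt_one hγ0 hγ1).mul_right C
  calc ∑' k, f k ≤ ∑' k, γ ^ k * C := (hgeom.of_nonneg_of_le hf hfγ).tsum_le_tsum hfγ hgeom
    _ = C / (1 - γ) := by rw [tsum_mul_right, tsum_geometric_of_lt_one hγ0 hγ1, div_eq_inv_mul]

/-- In dimension zero every `lamMin` and `lamMax` is `0` (an empty infimum), which makes `γ = 1`. -/
lemma gammaNS_of_dim_zero {m : ℕ} (Qb Pb P Abar : Matrix (Fin 0) (Fin 0) ℝ)
    (Q : Matrix (Fin m) (Fin m) ℝ) (K : Matrix (Fin m) (Fin 0) ℝ) (N S : ℕ) :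
    gammaNS Qb Pb P Abar Q K N S = 1 := by
  have hmin : ∀ R : Matrix (Fin 0) (Fin 0) ℝ, lamMin R = 0 := fun R => by
    unfold lamMin; split <;> simp
  have hmax : ∀ R : Matrix (Fin 0) (Fin 0) ℝ, lamMax R = 0 := fun R => by
    unfold lamMax; split <;> simp
  simp [gammaNS, alphaC, psiC, phiInf, hmin, hmax]

theorem stmt14_general {n m : ℕ}
    (A : Matrix (Fin n) (Fin n) ℝ) (B : Matrix (Fin n) (Fin m) ℝ)
    (K : Matrix (Fin m) (Fin n) ℝ) (Qb Pb : Matrix (Fin n) (Fin n) ℝ)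
    (hQb : Qb.PosDef) (hPb : Pb.PosDef)
    (hLyap : (A + B * K)ᵀ * Pb * (A + B * K) - Pb = -Qb)
    (c : ℝ)
    (X0 : Set (Fin n → ℝ)) (hX0 : X0 = {x : Fin n → ℝ | qf Pb x ≤ c})
    (X : Set (Fin n → ℝ)) (U : Set (Fin m → ℝ))
    (hX0X : X0 ⊆ X) (hKU : ∀ x ∈ X, K *ᵥ x ∈ U)
    (P : Matrix (Fin n) (Fin n) ℝ) (Q : Matrix (Fin m) (Fin m) ℝ)
    (hP : P.PosDef) (hQ : Q.PosDef)
    (S N : ℕ) (hSN : S + 1 ≤ N)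
    (ϑ : ℕ → Bool) (hϑ0 : ϑ 0 = false)
    (s : ℕ → ℕ) (hs0 : s 0 = 0)
    (hsrec : ∀ k, s (k + 1) = if ϑ (k + 1) = true then s k + 1 else 0)
    (hsS : ∀ k, s k ≤ S)
    (x : ℕ → Fin n → ℝ) (hxX0 : ∀ k, x k ∈ X0)
    (uplan : ℕ → ℕ → Fin m → ℝ)
    (hplan : ∀ k, ϑ k = false →
      Feasible A B X0 U N (x k) (uplan k) ∧
        cost A B P Q N (x k) (uplan k) = Vopt A B P Q X0 U N (x k))
    (hdyn : ∀ k, x (k + 1) = A *ᵥ x k + B *ᵥ uplan (k - s k) (s k))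
    (hattain : ∀ k, ∀ N' : ℕ, N - S ≤ N' → N' ≤ N →
      ∃ w : ℕ → Fin m → ℝ, Feasible A B X0 U N' (x k) w ∧
        cost A B P Q N' (x k) w = Vopt A B P Q X0 U N' (x k))
    (hgamma : gammaNS Qb Pb P (A + B * K) Q K N S < 1) :
    (∀ k : ℕ, Vopt A B P Q X0 U (N - s (k - 1)) (x k)
      ≤ gammaNS Qb Pb P (A + B * K) Q K N S ^ k * Vopt A B P Q X0 U N (x 0)) ∧
    ∑' k : ℕ, (qf P (x k) + qf Q (uplan (k - s k) (s k)))
      ≤ Vopt A B P Q X0 U N (x 0) / (1 - gammaNS Qb Pb P (A + B * K) Q K N S) := by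
  obtain rfl | hn := Nat.eq_zero_or_pos n
  · exact absurd hgamma (by simp [gammaNS_of_dim_zero])
  have h : IsRHCSetup A B K Qb Pb P Q := ⟨hn, hQb, hPb, hLyap, hP, hQ⟩
  have hinv : Set.MapsTo ((A + B * K) *ᵥ ·) X0 X0 := fun y hy => by
    subst hX0
    exact (qf_closedLoop_le A B K hQb.posSemidef hLyap y).trans hy
  have hKU0 : Set.MapsTo (K *ᵥ ·) X0 U := fun y hy => hKU y (hX0X hy)
  have hcl : IsClosedLoop A B P Q X0 U N ϑ s x uplan := ⟨hϑ0, hs0, hsrec, hxX0, hplan, hdyn⟩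
  exact ⟨hcl.Vopt_sub_counter_pred_le h hinv hKU0 hsS hSN hattain,
    tsum_le_div_one_sub_of_le_geometric
      (fun k => add_nonneg (qf_nonneg hP.posSemidef _) (qf_nonneg hQ.posSemidef _))
      (hcl.stage_le h hinv hKU0 hsS hSN hattain) (h.gammaNS_nonneg N S) hgamma⟩

/-- Theorem 1, part 1: exponential stability and infinite-horizon cost:
under the AR-RHC setting with `N ≥ S + 1` and `γ_{N,S} < 1`, for all `k ≥ 0` (with
`s(−1) := 0`): `V_{N−s(k−1)}(x(k)) ≤ γ_{N,S}^k·V_N(x(0))`, and the infinite-horizon cost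
satisfies `Σ_k (x(k)ᵀPx(k) + u_kᵀQu_k) ≤ V_N(x(0))/(1 − γ_{N,S})`, where
`u_k = u(k | k − s(k))` is the applied input. -/
theorem stmt14 {n m : ℕ}
    (A : Matrix (Fin n) (Fin n) ℝ) (B : Matrix (Fin n) (Fin m) ℝ)
    (K : Matrix (Fin m) (Fin n) ℝ) (Qb Pb : Matrix (Fin n) (Fin n) ℝ)
    (hQb : Qb.PosDef) (hPb : Pb.PosDef)
    (hLyap : (A + B * K)ᵀ * Pb * (A + B * K) - Pb = -Qb)
    (c : ℝ) (hc : 0 < c)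
    (X0 : Set (Fin n → ℝ)) (hX0 : X0 = {x : Fin n → ℝ | qf Pb x ≤ c})
    (X : Set (Fin n → ℝ)) (U : Set (Fin m → ℝ))
    (hX : Convex ℝ X) (hU : Convex ℝ U)
    (h0X : (0 : Fin n → ℝ) ∈ X) (h0U : (0 : Fin m → ℝ) ∈ U)
    (hX0X : X0 ⊆ X) (hKU : ∀ x ∈ X, K *ᵥ x ∈ U)
    (P : Matrix (Fin n) (Fin n) ℝ) (Q : Matrix (Fin m) (Fin m) ℝ)
    (hP : P.PosDef) (hQ : Q.PosDef)
    (S N : ℕ) (hSN : S + 1 ≤ N)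
    (ϑ : ℕ → Bool) (hϑ0 : ϑ 0 = false)
    (s : ℕ → ℕ) (hs0 : s 0 = 0)
    (hsrec : ∀ k, s (k + 1) = if ϑ (k + 1) = true then s k + 1 else 0)
    (hsS : ∀ k, s k ≤ S)
    (x : ℕ → Fin n → ℝ) (hxX0 : ∀ k, x k ∈ X0)
    (uplan : ℕ → ℕ → Fin m → ℝ)
    (hplan : ∀ k, ϑ k = false →
      Feasible A B X0 U N (x k) (uplan k) ∧
        cost A B P Q N (x k) (uplan k) = Vopt A B P Q X0 U N (x k))
    (hdyn : ∀ k, x (k + 1) = A *ᵥ x k + B *ᵥ uplan (k - s k) (s k))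
    (hattain : ∀ k, ∀ N' : ℕ, N - S ≤ N' → N' ≤ N →
      ∃ w : ℕ → Fin m → ℝ, Feasible A B X0 U N' (x k) w ∧
        cost A B P Q N' (x k) w = Vopt A B P Q X0 U N' (x k))
    (hgamma : gammaNS Qb Pb P (A + B * K) Q K N S < 1) :
    (∀ k : ℕ, Vopt A B P Q X0 U (N - s (k - 1)) (x k)
      ≤ gammaNS Qb Pb P (A + B * K) Q K N S ^ k * Vopt A B P Q X0 U N (x 0)) ∧
    ∑' k : ℕ, (qf P (x k) + qf Q (uplan (k - s k) (s k)))
      ≤ Vopt A B P Q X0 U N (x 0) / (1 - gammaNS Qb Pb P (A + B * K) Q K N S) :=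
  stmt14_general A B K Qb Pb hQb hPb hLyap c X0 hX0 X U hX0X hKU P Q hP hQ S N hSN ϑ hϑ0 s hs0 hsrec
    hsS x hxX0 uplan hplan hdyn hattain hgamma
end

section
/- (Convexity of the resilience management cost) Let ψ > 0, χ ∈ (0,1), ν ∈ ℝ, a ≥ 0, and let 𝒮 : ℝ → ℝ be twice continuously differentiable, nonnegative, nondecreasing, and convex. Then the function C : ℝ → ℝ defined by C(M) := (1 + ψ·χ^{ν − 𝒮(M)})^{𝒮(M) + 1} + (a/2)·M² is convex on ℝ. -/
open Real

/-- Composition of a convex monotone function with a convex function is convex. -/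
lemma comp_aux {g f : ℝ → ℝ} {s t : Set ℝ} (hs : Convex ℝ s) (hg : ConvexOn ℝ t g)
    (hg' : MonotoneOn g t) (hf : ConvexOn ℝ s f) (hft : ∀ x ∈ s, f x ∈ t) :
    ConvexOn ℝ s (fun x => g (f x)) := by
  refine ⟨hs, fun x hx y hy a b ha hb hab => ?_⟩
  have hxt := hft x hx
  have hyt := hft y hy
  have hmem : a • f x + b • f y ∈ t := hg.1 hxt hyt ha hb hab
  calc g (f (a • x + b • y)) ≤ g (a • f x + b • f y) :=
        hg' (hft _ (hs hx hy ha hb hab)) hmem (hf.2 hx hy ha hb hab)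
    _ ≤ a • g (f x) + b • g (f y) := hg.2 hxt hyt ha hb hab

/-- Convexity of `s ↦ log (1 + c * exp (b * s))` for `b, c > 0`. -/
lemma convexOn_log_one_add_exp {b c : ℝ} (hb : 0 < b) (hc : 0 < c) :
    ConvexOn ℝ Set.univ (fun s => Real.log (1 + c * Real.exp (b * s))) := by
  set L : ℝ → ℝ := fun s => Real.log (1 + c * Real.exp (b * s)) with hLdef
  have hpos : ∀ s : ℝ, 0 < 1 + c * Real.exp (b * s) := fun s => by positivity
  have hinner : ∀ s : ℝ, HasDerivAt (fun s => 1 + c * Real.exp (b * s))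
      (c * (Real.exp (b * s) * b)) s := by
    intro s
    have h1 : HasDerivAt (fun s : ℝ => b * s) b s := by
      simpa using (hasDerivAt_id s).const_mul b
    have h2 : HasDerivAt (fun s : ℝ => Real.exp (b * s)) (Real.exp (b * s) * b) s :=
      (Real.hasDerivAt_exp (b * s)).comp s h1
    exact (h2.const_mul c).const_add 1
  have hL' : ∀ s : ℝ, HasDerivAt L
      (c * (Real.exp (b * s) * b) / (1 + c * Real.exp (b * s))) s := by
    intro s
    exact (hinner s).log (hpos s).ne'
  have hderivL : deriv L = fun s => c * (Real.exp (b * s) * b) / (1 + c * Real.exp (b * s)) := by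
    funext s
    exact (hL' s).deriv
  have hG' : ∀ s : ℝ, HasDerivAt
      (fun s => c * (Real.exp (b * s) * b) / (1 + c * Real.exp (b * s)))
      ((c * (Real.exp (b * s) * b) * b * (1 + c * Real.exp (b * s)) -
        c * (Real.exp (b * s) * b) * (c * (Real.exp (b * s) * b))) /
        (1 + c * Real.exp (b * s)) ^ 2) s := by
    intro s
    have h1 : HasDerivAt (fun s : ℝ => b * s) b s := by
      simpa using (hasDerivAt_id s).const_mul b
    have h2 : HasDerivAt (fun s : ℝ => Real.exp (b * s)) (Real.exp (b * s) * b) s :=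
      (Real.hasDerivAt_exp (b * s)).comp s h1
    have hN : HasDerivAt (fun s => c * (Real.exp (b * s) * b))
        (c * (Real.exp (b * s) * b) * b) s := by
      have h3 := (h2.const_mul c).mul_const b
      simpa [mul_assoc] using h3
    exact hN.div (hinner s) (hpos s).ne'
  have hcont : Continuous L := by
    have h1 : Continuous fun s : ℝ => 1 + c * Real.exp (b * s) := by continuity
    exact h1.log fun s => (hpos s).ne'
  refine convexOn_of_deriv2_nonneg convex_univ hcont.continuousOn
    (fun x _ => (hL' x).differentiableAt.differentiableWithinAt) ?_ ?_
  · intro x _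
    rw [hderivL]
    exact (hG' x).differentiableAt.differentiableWithinAt
  · intro x _
    have h2 : deriv^[2] L x = deriv (deriv L) x := by
      simp [Function.iterate_succ, Function.iterate_zero, Function.comp]
    rw [h2, hderivL, (hG' x).deriv]
    apply div_nonneg _ (by positivity)
    have : c * (Real.exp (b * x) * b) * b * (1 + c * Real.exp (b * x)) -
        c * (Real.exp (b * x) * b) * (c * (Real.exp (b * x) * b)) =
        c * b ^ 2 * Real.exp (b * x) := by ring
    rw [this]
    positivity

/-- Convexity of the resilience management cost: for `ψ > 0`, `χ ∈ (0,1)`,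
`ν ∈ ℝ`, `a ≥ 0` and `𝒮 : ℝ → ℝ` twice continuously differentiable, nonnegative,
nondecreasing and convex, the cost
`C(M) := (1 + ψ·χ^{ν − 𝒮(M)})^{𝒮(M)+1} + (a/2)·M²` is convex on `ℝ`. -/
theorem stmt19 (ψ χ ν a : ℝ) (hψ : 0 < ψ) (hχ0 : 0 < χ) (hχ1 : χ < 1) (ha : 0 ≤ a)
    (𝒮 : ℝ → ℝ) (h𝒮smooth : ContDiff ℝ 2 𝒮) (h𝒮nonneg : ∀ y, 0 ≤ 𝒮 y)
    (h𝒮mono : Monotone 𝒮) (h𝒮conv : ConvexOn ℝ Set.univ 𝒮) :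
    ConvexOn ℝ Set.univ
      (fun M : ℝ => (1 + ψ * χ ^ (ν - 𝒮 M)) ^ (𝒮 M + 1) + a / 2 * M ^ 2) := by
  set b : ℝ := -Real.log χ with hbdef
  set c : ℝ := ψ * χ ^ ν with hcdef
  have hb : 0 < b := by
    have := Real.log_neg hχ0 hχ1
    simp [hbdef]; linarith
  have hc : 0 < c := by
    have : (0:ℝ) < χ ^ ν := Real.rpow_pos_of_pos hχ0 ν
    positivity
  -- rewrite ψ * χ^(ν - s) = c * exp (b * s)
  have hrw : ∀ s : ℝ, ψ * χ ^ (ν - s) = c * Real.exp (b * s) := by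
    intro s
    rw [hcdef, Real.rpow_def_of_pos hχ0, Real.rpow_def_of_pos hχ0, hbdef, mul_assoc,
      ← Real.exp_add]
    ring_nf
  set L : ℝ → ℝ := fun s => Real.log (1 + c * Real.exp (b * s)) with hLdef
  have hposL : ∀ s : ℝ, 0 < 1 + c * Real.exp (b * s) := fun s => by positivity
  have hLconv : ConvexOn ℝ Set.univ L := convexOn_log_one_add_exp hb hc
  have hLmono : Monotone L := by
    intro x y hxy
    apply Real.log_le_log (hposL x)
    have : Real.exp (b * x) ≤ Real.exp (b * y) := by
      apply Real.exp_le_exp.2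
      nlinarith
    nlinarith
  have hLnonneg : ∀ s : ℝ, 0 ≤ L s := by
    intro s
    apply Real.log_nonneg
    nlinarith [Real.exp_pos (b * s)]
  -- h s = (s + 1) * L s convex and monotone on Ici 0
  set h : ℝ → ℝ := fun s => (s + 1) * L s with hhdef
  have haff : ConvexOn ℝ (Set.Ici (0:ℝ)) (fun s : ℝ => s + 1) :=
    (convexOn_id (convex_Ici 0)).add (convexOn_const 1 (convex_Ici 0))
  have hhconv : ConvexOn ℝ (Set.Ici (0:ℝ)) h := by
    have := haff.mul (hLconv.subset (Set.subset_univ _) (convex_Ici 0))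
      (fun x hx => by simpa using add_nonneg hx zero_le_one)
      (fun x _ => hLnonneg x)
      (((monotone_id.add_const 1).monotoneOn _).monovaryOn (hLmono.monotoneOn _))
    exact this
  have hhmono : MonotoneOn h (Set.Ici (0:ℝ)) := by
    intro x hx y hy hxy
    have h1 : x + 1 ≤ y + 1 := by linarith
    have h2 : L x ≤ L y := hLmono hxy
    have h3 : (0:ℝ) ≤ x + 1 := by simp at hx; linarith
    exact mul_le_mul h1 h2 (hLnonneg x) (by linarith)
  -- g = exp ∘ h convex and monotone on Ici 0
  set g : ℝ → ℝ := fun s => Real.exp (h s) with hgdef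
  have hgconv : ConvexOn ℝ (Set.Ici (0:ℝ)) g :=
    comp_aux (convex_Ici 0) convexOn_exp (Real.exp_monotone.monotoneOn _) hhconv
      (fun x _ => Set.mem_univ _)
  have hgmono : MonotoneOn g (Set.Ici (0:ℝ)) := fun x hx y hy hxy =>
    Real.exp_le_exp.2 (hhmono hx hy hxy)
  -- composition with 𝒮
  have hcomp : ConvexOn ℝ Set.univ (fun M => g (𝒮 M)) :=
    comp_aux convex_univ hgconv hgmono h𝒮conv (fun x _ => h𝒮nonneg x)
  -- quadratic part
  have hquad : ConvexOn ℝ Set.univ (fun M : ℝ => a / 2 * M ^ 2) := by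
    have := (Even.convexOn_pow (even_two : Even 2)).smul
      (show (0:ℝ) ≤ a / 2 by linarith)
    simpa [smul_eq_mul] using this
  -- identify the cost with g ∘ 𝒮 plus quadratic
  have key : ∀ M : ℝ, (1 + ψ * χ ^ (ν - 𝒮 M)) ^ (𝒮 M + 1) = g (𝒮 M) := by
    intro M
    have hpos' : 0 < 1 + ψ * χ ^ (ν - 𝒮 M) := by
      nlinarith [Real.rpow_pos_of_pos hχ0 (ν - 𝒮 M)]
    rw [Real.rpow_def_of_pos hpos', hrw (𝒮 M)]
    simp only [hgdef, hhdef, hLdef]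
    congr 1
    ring
  have heq : (fun M : ℝ => (1 + ψ * χ ^ (ν - 𝒮 M)) ^ (𝒮 M + 1) + a / 2 * M ^ 2) =
      fun M : ℝ => g (𝒮 M) + a / 2 * M ^ 2 :=
    funext fun M => by rw [key M]
  rw [heq]
  exact hcomp.add hquad
end
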